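/- Let M < ∞, let u ∈ L²([0,T]×O) with ∫_{[0,T]×O} u² ≤ M, and let Y, Z : [0,T]×O → ℝ be bounded measurable functions. Then for all (t,r) ∈ [0,T]×O: |∫₀^t ∫_O G(t,s,r,q)(F(s,q,Y(s,q)) − F(s,q,Z(s,q))) u(s,q) dq ds| ≤ K² √M (γ/(γ−d))^{1/2} T^{(γ−d)/(2γ)} · sup_{(s,q)∈[0,T]×O} |Y(s,q) − Z(s,q)|. -/

import Mathlib

/-! The Lipschitz bound on `F` reduces the integrand to `K S |G| |u|`, and Cauchy–Schwarz on
`[0,t] × O` splits off `‖u‖₂ ≤ √M`. For the kernel, (G1) and (G2) give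
`∫_O G(t,s,r,q)² dq ≤ K² (t-s)^(-d/γ)`, which is integrable in `s` precisely because `γ > d`:
`∫₀ᵗ (t-s)^(-d/γ) ds = (γ/(γ-d)) t^((γ-d)/γ)`. -/

open MeasureTheory Filter Set Topology
open scoped ENNReal NNReal

noncomputable section

/-- Euclidean space `ℝ^d`. -/
abbrev Euc (d : ℕ) := EuclideanSpace ℝ (Fin d)

/-- `u ∈ L²([0,T] × O)`. -/
def MemL2 {d : ℕ} (O : Set (Euc d)) (T : ℝ) (u : ℝ → Euc d → ℝ) : Prop :=
  MemLp (fun p : ℝ × Euc d => u p.1 p.2) 2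
    (((volume : Measure ℝ).restrict (Icc (0:ℝ) T)).prod
      ((volume : Measure (Euc d)).restrict O))

/-- `∫_{[0,T]×O} u²`, as an extended real. -/
def energy {d : ℕ} (O : Set (Euc d)) (T : ℝ) (u : ℝ → Euc d → ℝ) : ℝ≥0∞ :=
  ∫⁻ s in Icc (0:ℝ) T, ∫⁻ q in O, (‖u s q‖₊ : ℝ≥0∞) ^ 2

open Function

section IteratedIntegrals

variable {α β : Type*} [MeasurableSpace α] [MeasurableSpace β] {μ : Measure α} {ν : Measure β}

theorem lintegral_sq_le_mul_lintegral {f : β → ℝ≥0∞} {c : ℝ≥0∞} (hf : AEMeasurable f ν)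
    (hfc : ∀ᵐ y ∂ν, f y ≤ c) : ∫⁻ y, f y ^ 2 ∂ν ≤ c * ∫⁻ y, f y ∂ν := by
  rw [← lintegral_const_mul'' c hf]
  exact lintegral_mono_ae (hfc.mono fun y hy => by rw [sq]; exact mul_le_mul_left hy _)

theorem lintegral_lintegral_mul_le [SFinite μ] [SFinite ν] {f g : α → β → ℝ≥0∞}
    (hf : AEMeasurable (uncurry f) (μ.prod ν)) (hg : AEMeasurable (uncurry g) (μ.prod ν)) :
    ∫⁻ x, ∫⁻ y, f x y * g x y ∂ν ∂μ ≤
      (∫⁻ x, ∫⁻ y, f x y ^ 2 ∂ν ∂μ) ^ (1 / 2 : ℝ) *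
        (∫⁻ x, ∫⁻ y, g x y ^ 2 ∂ν ∂μ) ^ (1 / 2 : ℝ) := by
  have h := ENNReal.lintegral_mul_le_Lp_mul_Lq _ Real.HolderConjugate.two_two hf hg
  rw [lintegral_prod _ (hf.mul hg), lintegral_prod _ (hf.pow_const _),
    lintegral_prod _ (hg.pow_const _)] at h
  simpa only [Pi.mul_apply, uncurry_apply_pair, ENNReal.rpow_two] using h

theorem ENNReal.ofReal_rpow_one_half (a : ℝ) :
    ENNReal.ofReal a ^ (1 / 2 : ℝ) = ENNReal.ofReal √a := by
  rcases le_total 0 a with ha | ha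
  · rw [ENNReal.ofReal_rpow_of_nonneg ha (by norm_num), Real.sqrt_eq_rpow]
  · rw [ENNReal.ofReal_of_nonpos ha, Real.sqrt_eq_zero'.2 ha, ENNReal.ofReal_zero,
      ENNReal.zero_rpow_of_pos (by norm_num)]

theorem abs_integral_integral_mul_mul_le [SFinite μ] [SFinite ν] {g φ u : α → β → ℝ}
    {c A B : ℝ} (hc : 0 ≤ c) (hg : AEMeasurable (uncurry g) (μ.prod ν))
    (hu : AEMeasurable (uncurry u) (μ.prod ν)) (hφ : ∀ᵐ x ∂μ, ∀ᵐ y ∂ν, |φ x y| ≤ c)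
    (hgA : ∫⁻ x, ∫⁻ y, ‖g x y‖ₑ ^ 2 ∂ν ∂μ ≤ ENNReal.ofReal A)
    (huB : ∫⁻ x, ∫⁻ y, ‖u x y‖ₑ ^ 2 ∂ν ∂μ ≤ ENNReal.ofReal B) :
    |∫ x, ∫ y, g x y * φ x y * u x y ∂ν ∂μ| ≤ c * √A * √B := by
  rw [← ENNReal.ofReal_le_ofReal_iff (by positivity), ← Real.enorm_eq_ofReal_abs]
  calc ‖∫ x, ∫ y, g x y * φ x y * u x y ∂ν ∂μ‖ₑ
      ≤ ∫⁻ x, ∫⁻ y, ‖g x y * φ x y * u x y‖ₑ ∂ν ∂μ :=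
        (enorm_integral_le_lintegral_enorm _).trans
          (lintegral_mono fun x => enorm_integral_le_lintegral_enorm _)
    _ ≤ ∫⁻ x, ∫⁻ y, ENNReal.ofReal c * (‖g x y‖ₑ * ‖u x y‖ₑ) ∂ν ∂μ := by
        refine lintegral_mono_ae (hφ.mono fun x hx => lintegral_mono_ae (hx.mono fun y hy => ?_))
        rw [enorm_mul, enorm_mul, Real.enorm_eq_ofReal_abs (φ x y), mul_right_comm, mul_comm]
        gcongr
    _ = ENNReal.ofReal c * ∫⁻ x, ∫⁻ y, ‖g x y‖ₑ * ‖u x y‖ₑ ∂ν ∂μ := by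
        simp_rw [lintegral_const_mul' _ _ ENNReal.ofReal_ne_top]
    _ ≤ ENNReal.ofReal c * (ENNReal.ofReal A ^ (1 / 2 : ℝ) * ENNReal.ofReal B ^ (1 / 2 : ℝ)) := by
        gcongr
        exact (lintegral_lintegral_mul_le hg.enorm hu.enorm).trans (by gcongr)
    _ = ENNReal.ofReal (c * √A * √B) := by
        rw [ENNReal.ofReal_rpow_one_half, ENNReal.ofReal_rpow_one_half,
          ← ENNReal.ofReal_mul (Real.sqrt_nonneg _), ← ENNReal.ofReal_mul hc, mul_assoc]

theorem lintegral_Icc_ofReal_sub_rpow {t p : ℝ} (ht : 0 ≤ t) (hp : -1 < p) :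
    ∫⁻ s in Icc 0 t, ENNReal.ofReal ((t - s) ^ p) = ENNReal.ofReal (t ^ (p + 1) / (p + 1)) := by
  have hint : IntegrableOn (fun s => (t - s) ^ p) (Icc 0 t) := by
    rw [integrableOn_Icc_iff_integrableOn_Ioc, ← intervalIntegrable_iff_integrableOn_Ioc_of_le ht]
    simpa using (intervalIntegral.intervalIntegrable_rpow' (a := t) (b := 0) hp).comp_sub_left t
  rw [← ofReal_integral_eq_lintegral_ofReal hint (ae_restrict_of_forall_mem measurableSet_Icc
    fun s hs => Real.rpow_nonneg (sub_nonneg.2 hs.2) p), integral_Icc_eq_integral_Ioc,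
    ← intervalIntegral.integral_of_le ht,
    intervalIntegral.integral_comp_sub_left (fun x => x ^ p) t, sub_self, sub_zero,
    integral_rpow (Or.inl hp), Real.zero_rpow (by linarith), sub_zero]

theorem lintegral_Icc_lintegral_sq_le_of_kernel_bounds {k : ℝ → β → ℝ} {K t p : ℝ}
    (hK : 0 ≤ K) (ht : 0 ≤ t) (hp : -1 < p)
    (hk : ∀ s, AEMeasurable (k s) ν)
    (hk1 : ∀ s ∈ Ico 0 t, ∫⁻ y, ‖k s y‖ₑ ∂ν ≤ ENNReal.ofReal K)
    (hk2 : ∀ s ∈ Ico 0 t, ∀ᵐ y ∂ν, |k s y| ≤ K * (t - s) ^ p) :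
    ∫⁻ s in Icc 0 t, ∫⁻ y, ‖k s y‖ₑ ^ 2 ∂ν ≤ ENNReal.ofReal (K ^ 2 * (t ^ (p + 1) / (p + 1))) := by
  rw [Measure.restrict_congr_set Ico_ae_eq_Icc.symm]
  calc ∫⁻ s in Ico 0 t, ∫⁻ y, ‖k s y‖ₑ ^ 2 ∂ν
      ≤ ∫⁻ s in Ico 0 t, ENNReal.ofReal (K * (t - s) ^ p) * ENNReal.ofReal K := by
        refine setLIntegral_mono' measurableSet_Ico fun s hs => ?_
        refine (lintegral_sq_le_mul_lintegral (hk s).enorm ((hk2 s hs).mono fun y hy => ?_)).trans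
          (by gcongr; exact hk1 s hs)
        rw [Real.enorm_eq_ofReal_abs]
        exact ENNReal.ofReal_le_ofReal hy
    _ = ENNReal.ofReal (K ^ 2) * ∫⁻ s in Icc 0 t, ENNReal.ofReal ((t - s) ^ p) := by
        rw [Measure.restrict_congr_set Ico_ae_eq_Icc,
          ← lintegral_const_mul' _ _ ENNReal.ofReal_ne_top]
        refine setLIntegral_congr_fun measurableSet_Icc fun s hs => ?_
        rw [← ENNReal.ofReal_mul (mul_nonneg hK (Real.rpow_nonneg (sub_nonneg.2 hs.2) p)),
          ← ENNReal.ofReal_mul (sq_nonneg K)]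
        congr 1
        ring
    _ = _ := by rw [lintegral_Icc_ofReal_sub_rpow ht hp, ← ENNReal.ofReal_mul (sq_nonneg K)]

end IteratedIntegrals

theorem sqrt_sq_mul_rpow_div_le {d γ t T K : ℝ} (hγ0 : 0 < γ) (hγ : d < γ) (ht : 0 ≤ t)
    (htT : t ≤ T) (hK : 0 ≤ K) :
    √(K ^ 2 * (t ^ (-d / γ + 1) / (-d / γ + 1))) ≤
      K * √(γ / (γ - d)) * T ^ ((γ - d) / (2 * γ)) := by
  have hexp : -d / γ + 1 = (γ - d) / γ := by field_simp; ring
  have hhalf : (γ - d) / γ = (γ - d) / (2 * γ) * 2 := by field_simp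
  rw [hexp, div_div_eq_mul_div, mul_div_assoc, hhalf, Real.rpow_mul ht, Real.rpow_two,
    Real.sqrt_mul (sq_nonneg K), Real.sqrt_sq hK,
    Real.sqrt_mul (sq_nonneg _), Real.sqrt_sq (Real.rpow_nonneg ht _)]
  have : 0 ≤ (γ - d) / (2 * γ) := div_nonneg (sub_nonneg.2 hγ.le) (by positivity)
  calc _ = K * √(γ / (γ - d)) * t ^ ((γ - d) / (2 * γ)) := by ring
    _ ≤ _ := by gcongr

theorem MemL2.aemeasurable_restrict {d : ℕ} {O : Set (Euc d)} {T t : ℝ} {u : ℝ → Euc d → ℝ}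
    (hu : MemL2 O T u) (htT : t ≤ T) :
    AEMeasurable (uncurry u) (((volume : Measure ℝ).restrict (Icc 0 t)).prod (volume.restrict O)) :=
  hu.1.aemeasurable.mono_measure
    (Measure.prod_mono (Measure.restrict_mono (Icc_subset_Icc_right htT) le_rfl) le_rfl)

theorem stmt_14_general
    {d : ℕ} (O : Set (Euc d)) (hOopen : IsOpen O)
    (T K γ : ℝ) (hK : 0 < K) (hγ : (d : ℝ) < γ)
    (G : ℝ → ℝ → Euc d → Euc d → ℝ)
    (hGmeas : Measurable fun p : (ℝ × ℝ) × Euc d × Euc d => G p.1.1 p.1.2 p.2.1 p.2.2)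
    (hG1 : ∀ t ∈ Icc (0:ℝ) T, ∀ s ∈ Icc (0:ℝ) T, ∀ r ∈ O,
      (∫⁻ q in O, (‖G t s r q‖₊ : ℝ≥0∞)) ≤ ENNReal.ofReal K)
    (hG2 : ∀ s t : ℝ, 0 ≤ s → s < t → t ≤ T → ∀ r ∈ O, ∀ q ∈ O,
      |G t s r q| ≤ K * (t - s) ^ (-(d : ℝ) / γ))
    (F : ℝ → Euc d → ℝ → ℝ)
    (hFLip : ∀ t ∈ Icc (0:ℝ) T, ∀ r ∈ O, ∀ x y : ℝ,
      |F t r x - F t r y| ≤ K * |x - y|)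
    (M : ℝ)
    (u : ℝ → Euc d → ℝ) (huL2 : MemL2 O T u)
    (huM : energy O T u ≤ ENNReal.ofReal M)
    (Y Z : ℝ → Euc d → ℝ) :
    ∀ S : ℝ, 0 ≤ S → (∀ s ∈ Icc (0:ℝ) T, ∀ q ∈ O, |Y s q - Z s q| ≤ S) →
      ∀ t ∈ Icc (0:ℝ) T, ∀ r ∈ O,
        |∫ s in Icc (0:ℝ) t, ∫ q in O,
            G t s r q * (F s q (Y s q) - F s q (Z s q)) * u s q| ≤
          K ^ 2 * Real.sqrt M * Real.sqrt (γ / (γ - d)) *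
            T ^ ((γ - (d : ℝ)) / (2 * γ)) * S := by
  intro S hS hYZ t ht r hr
  have hO : MeasurableSet O := hOopen.measurableSet
  have hγ0 : 0 < γ := (Nat.cast_nonneg d).trans_lt hγ
  have htT : Icc 0 t ⊆ Icc 0 T := Icc_subset_Icc_right ht.2
  have hGslice : Measurable (uncurry fun s q => G t s r q) :=
    hGmeas.comp ((measurable_const.prodMk measurable_fst).prodMk
      (measurable_const.prodMk measurable_snd))
  have hFdiff : ∀ᵐ s ∂volume.restrict (Icc 0 t), ∀ᵐ q ∂volume.restrict O,
      |F s q (Y s q) - F s q (Z s q)| ≤ K * S :=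
    ae_restrict_of_forall_mem measurableSet_Icc fun s hs => ae_restrict_of_forall_mem hO
      fun q hq => (hFLip s (htT hs) q hq _ _).trans (by gcongr; exact hYZ s (htT hs) q hq)
  have hGsq := lintegral_Icc_lintegral_sq_le_of_kernel_bounds hK.le ht.1
    (by rw [neg_div, neg_lt_neg_iff]; exact (div_lt_one hγ0).2 hγ)
    (fun s => hGslice.of_uncurry_left.aemeasurable)
    (fun s hs => hG1 t ht s (htT (Ico_subset_Icc_self hs)) r hr)
    (fun s hs => ae_restrict_of_forall_mem hO fun q hq => hG2 s t hs.1 hs.2 ht.2 r hr q hq)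
  have huM' : ∫⁻ s in Icc 0 t, ∫⁻ q in O, ‖u s q‖ₑ ^ 2 ≤ ENNReal.ofReal M :=
    (lintegral_mono_set htT).trans huM
  calc _ ≤ K * S * √(K ^ 2 * (t ^ (-d / γ + 1) / (-d / γ + 1))) * √M :=
        abs_integral_integral_mul_mul_le (by positivity) hGslice.aemeasurable
          (huL2.aemeasurable_restrict ht.2) hFdiff hGsq huM'
    _ ≤ K * S * (K * √(γ / (γ - d)) * T ^ ((γ - d) / (2 * γ))) * √M := by
        gcongr
        exact sqrt_sq_mul_rpow_div_le hγ0 hγ ht.1 ht.2 hK.le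
    _ = _ := by ring

/-- **Explicit Lipschitz-type bound for the controlled convolution.**
For bounded measurable `Y`, `Z` and `u` with `∫_{[0,T]×O} u² ≤ M`,
`|∫₀^t ∫_O G(t,s,r,q)(F(s,q,Y(s,q)) − F(s,q,Z(s,q))) u(s,q) dq ds|
  ≤ K² √M (γ/(γ−d))^{1/2} T^{(γ−d)/(2γ)} · sup_{[0,T]×O} |Y − Z|`
(every upper bound `S ≥ 0` of `|Y−Z|` on `[0,T]×O` works on the right). -/
theorem stmt_14
    {d : ℕ} (O : Set (Euc d)) (hOopen : IsOpen O) (hObdd : Bornology.IsBounded O)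
    (T K γ : ℝ) (hT : 0 < T) (hK : 0 < K) (hγ : (d : ℝ) < γ)
    (G : ℝ → ℝ → Euc d → Euc d → ℝ)
    (hGmeas : Measurable fun p : (ℝ × ℝ) × Euc d × Euc d => G p.1.1 p.1.2 p.2.1 p.2.2)
    (hGzero : ∀ t s : ℝ, t ≤ s → ∀ r q : Euc d, G t s r q = 0)
    (hG1 : ∀ t ∈ Icc (0:ℝ) T, ∀ s ∈ Icc (0:ℝ) T, ∀ r ∈ O,
      (∫⁻ q in O, (‖G t s r q‖₊ : ℝ≥0∞)) ≤ ENNReal.ofReal K)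
    (hG2 : ∀ s t : ℝ, 0 ≤ s → s < t → t ≤ T → ∀ r ∈ O, ∀ q ∈ O,
      |G t s r q| ≤ K * (t - s) ^ (-(d : ℝ) / γ))
    (F : ℝ → Euc d → ℝ → ℝ)
    (hFmeas : Measurable fun p : ℝ × Euc d × ℝ => F p.1 p.2.1 p.2.2)
    (hFLip : ∀ t ∈ Icc (0:ℝ) T, ∀ r ∈ O, ∀ x y : ℝ,
      |F t r x - F t r y| ≤ K * |x - y|)
    (M : ℝ) (hM : 0 ≤ M)
    (u : ℝ → Euc d → ℝ) (huL2 : MemL2 O T u)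
    (huM : energy O T u ≤ ENNReal.ofReal M)
    (Y Z : ℝ → Euc d → ℝ)
    (hYmeas : Measurable fun p : ℝ × Euc d => Y p.1 p.2)
    (hZmeas : Measurable fun p : ℝ × Euc d => Z p.1 p.2)
    (hYbdd : ∃ B : ℝ, ∀ s ∈ Icc (0:ℝ) T, ∀ q ∈ O, |Y s q| ≤ B)
    (hZbdd : ∃ B : ℝ, ∀ s ∈ Icc (0:ℝ) T, ∀ q ∈ O, |Z s q| ≤ B) :
    ∀ S : ℝ, 0 ≤ S → (∀ s ∈ Icc (0:ℝ) T, ∀ q ∈ O, |Y s q - Z s q| ≤ S) →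
      ∀ t ∈ Icc (0:ℝ) T, ∀ r ∈ O,
        |∫ s in Icc (0:ℝ) t, ∫ q in O,
            G t s r q * (F s q (Y s q) - F s q (Z s q)) * u s q| ≤
          K ^ 2 * Real.sqrt M * Real.sqrt (γ / (γ - d)) *
            T ^ ((γ - (d : ℝ)) / (2 * γ)) * S :=
  stmt_14_general O hOopen T K γ hK hγ G hGmeas hG1 hG2 F hFLip M u huL2 huM Y Z

end
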